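/- arXiv:2601.10036 — 2 statements merged into one kernel-verified Lean document; each statement's English description precedes it below -/
import Mathlib

section
/- Let n ≥ 5 be an odd integer and let T = DC((n-3)/2, (n-3)/2, 3). Then the multiset of eigenvalues of the adjacency matrix of T is {√((n+1)/2), -√((n+1)/2), √((n-3)/2), -√((n-3)/2)} together with the eigenvalue 0 with multiplicity n - 4. -/
open scoped Classical

/-- Adjacency matrix of a simple graph on `Fin n`, over `ℝ`. -/
noncomputable def adjMat {n : ℕ} (G : SimpleGraph (Fin n)) : Matrix (Fin n) (Fin n) ℝ :=
  fun i j => if G.Adj i j then 1 else 0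

/-- The eigenvalues (roots of the characteristic polynomial, with multiplicity)
of the adjacency matrix, sorted in nondecreasing order. -/
noncomputable def eigList {n : ℕ} (G : SimpleGraph (Fin n)) : List ℝ :=
  (Matrix.charpoly (adjMat G)).roots.sort (· ≤ ·)

/-- `lam k G` is the `k`-th largest adjacency eigenvalue of `G` (so `lam 1` is `λ₁`). -/
noncomputable def lam {n : ℕ} (k : ℕ) (G : SimpleGraph (Fin n)) : ℝ :=
  (eigList G).getD (n - k) 0

/-- The double comet `DC(k1, k2, l)`: a path on `l` vertices (the vertices `0, …, l-1`),
with `k1` pendant leaves attached to the terminal vertex `0` and `k2` pendant leaves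
attached to the terminal vertex `l - 1`. -/
def doubleComet (k1 k2 l : ℕ) : SimpleGraph (Fin (k1 + k2 + l)) :=
  SimpleGraph.fromRel (fun i j =>
    ((i : ℕ) + 1 = (j : ℕ) ∧ (j : ℕ) < l) ∨
    (l ≤ (i : ℕ) ∧ (i : ℕ) < l + k1 ∧ (j : ℕ) = 0) ∨
    (l + k1 ≤ (i : ℕ) ∧ (j : ℕ) = l - 1))

/-- Degree of a vertex. -/
noncomputable def deg {n : ℕ} (G : SimpleGraph (Fin n)) (u : Fin n) : ℕ :=
  (Finset.univ.filter (fun w => G.Adj u w)).card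

/-!
Listing the path vertices first, the adjacency matrix of `DC(k₁, k₂, 3)` is the block matrix
`[[P, B], [Bᵀ, 0]]` with `P` the adjacency matrix of the path on three vertices and
`B Bᵀ = diag(k₁, 0, k₂)`. Multiplying `X - A` on the right by `[[X, 0], [Bᵀ, 1]]` clears the
lower left block, so `χ_A · X³ = X^(k₁ + k₂) · det (X (X - P) - B Bᵀ)`, and this `3 × 3`
determinant is `X² (X⁴ - (k₁ + k₂ + 2) X² + k₁ k₂ + k₁ + k₂)`. For `k₁ = k₂ = k` the quartic
factors as `(X² - (k + 2)) (X² - k)`.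
-/

open Polynomial Matrix

theorem Matrix.det_fromBlocks_smul_one₂₂_mul_pow {R m n : Type*} [CommRing R] [Fintype m]
    [DecidableEq m] [Fintype n] [DecidableEq n] (a : R) (A : Matrix m m R) (B : Matrix m n R)
    (C : Matrix n m R) :
    (fromBlocks A B C (a • 1)).det * a ^ Fintype.card m =
      (a • A - B * C).det * a ^ Fintype.card n := by
  have hprod : fromBlocks A B C (a • 1) * fromBlocks (a • 1) 0 (-C) 1 =
      fromBlocks (a • A - B * C) B 0 (a • 1) := by
    simp only [fromBlocks_multiply, Matrix.mul_smul, Matrix.smul_mul, Matrix.mul_zero,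
      Matrix.mul_one, Matrix.one_mul, Matrix.mul_neg, zero_add, sub_eq_add_neg, add_neg_cancel]
  simpa [det_mul, det_fromBlocks_zero₁₂, det_fromBlocks_zero₂₁] using congrArg det hprod

theorem Matrix.charpoly_fromBlocks_zero₂₂_mul_X_pow {R m n : Type*} [CommRing R] [Fintype m]
    [DecidableEq m] [Fintype n] [DecidableEq n] (A : Matrix m m R) (B : Matrix m n R)
    (C : Matrix n m R) :
    (fromBlocks A B C 0).charpoly * X ^ Fintype.card m =
      ((X : R[X]) • A.charmatrix - (B * C).map Polynomial.C).det * X ^ Fintype.card n := by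
  have hzero : charmatrix (0 : Matrix n n R) = (X : R[X]) • 1 := by
    simp [charmatrix, smul_one_eq_diagonal]
  rw [charpoly, charmatrix_fromBlocks, hzero, det_fromBlocks_smul_one₂₂_mul_pow, Matrix.map_mul,
    Matrix.neg_mul, Matrix.mul_neg, neg_neg]

def doubleCometThreeEquiv (k1 k2 : ℕ) : Fin 3 ⊕ (Fin k1 ⊕ Fin k2) ≃ Fin (k1 + k2 + 3) :=
  ((Equiv.refl _).sumCongr finSumFinEquiv).trans (finSumFinEquiv.trans (finCongr (by omega)))

section doubleCometThreeEquiv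

variable {k1 k2 : ℕ}

@[simp]
theorem val_doubleCometThreeEquiv_inl (i : Fin 3) :
    (doubleCometThreeEquiv k1 k2 (.inl i) : ℕ) = i := by
  simp [doubleCometThreeEquiv]

@[simp]
theorem val_doubleCometThreeEquiv_inr_inl (i : Fin k1) :
    (doubleCometThreeEquiv k1 k2 (.inr (.inl i)) : ℕ) = 3 + i := by
  simp [doubleCometThreeEquiv, add_comm]

@[simp]
theorem val_doubleCometThreeEquiv_inr_inr (i : Fin k2) :
    (doubleCometThreeEquiv k1 k2 (.inr (.inr i)) : ℕ) = 3 + k1 + i := by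
  simp [doubleCometThreeEquiv]
  omega

end doubleCometThreeEquiv

theorem doubleComet_adj_iff {k1 k2 l : ℕ} (i j : Fin (k1 + k2 + l)) :
    (doubleComet k1 k2 l).Adj i j ↔ (i : ℕ) ≠ j ∧
      (((i : ℕ) + 1 = j ∧ (j : ℕ) < l) ∨ (l ≤ (i : ℕ) ∧ (i : ℕ) < l + k1 ∧ (j : ℕ) = 0) ∨
        (l + k1 ≤ (i : ℕ) ∧ (j : ℕ) = l - 1) ∨
       ((j : ℕ) + 1 = i ∧ (i : ℕ) < l) ∨ (l ≤ (j : ℕ) ∧ (j : ℕ) < l + k1 ∧ (i : ℕ) = 0) ∨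
        (l + k1 ≤ (j : ℕ) ∧ (i : ℕ) = l - 1)) := by
  simp only [doubleComet, SimpleGraph.fromRel_adj, Fin.val_ne_iff, or_assoc]

def pathThreeAdj : Matrix (Fin 3) (Fin 3) ℝ := !![0, 1, 0; 1, 0, 1; 0, 1, 0]

def leafAdj (k1 k2 : ℕ) : Matrix (Fin 3) (Fin k1 ⊕ Fin k2) ℝ :=
  fromCols (of fun i _ => if i = 0 then 1 else 0) (of fun i _ => if i = 2 then 1 else 0)

theorem adjMat_doubleComet_three (k1 k2 : ℕ) :
    adjMat (doubleComet k1 k2 3) =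
      reindex (doubleCometThreeEquiv k1 k2) (doubleCometThreeEquiv k1 k2)
        (fromBlocks pathThreeAdj (leafAdj k1 k2) (leafAdj k1 k2)ᵀ 0) := by
  ext i j
  obtain ⟨s, rfl⟩ := (doubleCometThreeEquiv k1 k2).surjective i
  obtain ⟨t, rfl⟩ := (doubleCometThreeEquiv k1 k2).surjective j
  simp only [adjMat, doubleComet_adj_iff, reindex_apply, submatrix_apply, Equiv.symm_apply_apply]
  rcases s with i | i | i <;> rcases t with j | j | j <;>
    simp only [fromBlocks_apply₁₁, fromBlocks_apply₁₂, fromBlocks_apply₂₁, fromBlocks_apply₂₂,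
      val_doubleCometThreeEquiv_inl, val_doubleCometThreeEquiv_inr_inl,
      val_doubleCometThreeEquiv_inr_inr, leafAdj, transpose_apply, fromCols_apply_inl,
      fromCols_apply_inr, of_apply]
  case inl.inl => fin_cases i <;> fin_cases j <;> simp [pathThreeAdj]
  all_goals
    simp only [Fin.ext_iff, Fin.val_zero, Fin.val_two, Matrix.zero_apply]
    split_ifs <;> first | rfl | (exfalso; omega)

theorem leafAdj_mul_transpose (k1 k2 : ℕ) :
    leafAdj k1 k2 * (leafAdj k1 k2)ᵀ = diagonal ![(k1 : ℝ), 0, (k2 : ℝ)] := by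
  ext i j
  fin_cases i <;> fin_cases j <;> simp [leafAdj, transpose_fromCols, mul_apply]

theorem det_X_smul_charmatrix_pathThreeAdj_sub (a b : ℝ) :
    ((X : ℝ[X]) • pathThreeAdj.charmatrix - (diagonal ![a, 0, b]).map C).det =
      X ^ 2 * (X ^ 4 - C (a + b + 2) * X ^ 2 + C (a * b + a + b)) := by
  rw [det_fin_three]
  simp [pathThreeAdj, diagonal, map_ofNat C 2]
  ring

theorem charpoly_adjMat_doubleComet_three {k1 k2 : ℕ} (hk : 0 < k1 + k2) :
    (adjMat (doubleComet k1 k2 3)).charpoly =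
      X ^ (k1 + k2 - 1) *
        (X ^ 4 - C ((k1 : ℝ) + k2 + 2) * X ^ 2 + C ((k1 : ℝ) * k2 + k1 + k2)) := by
  refine mul_right_cancel₀ (pow_ne_zero 3 X_ne_zero) ?_
  have hblock := charpoly_fromBlocks_zero₂₂_mul_X_pow pathThreeAdj (leafAdj k1 k2) (leafAdj k1 k2)ᵀ
  rw [leafAdj_mul_transpose, det_X_smul_charmatrix_pathThreeAdj_sub] at hblock
  rw [Fintype.card_fin, Fintype.card_sum, Fintype.card_fin, Fintype.card_fin] at hblock
  rw [adjMat_doubleComet_three, charpoly_reindex, hblock]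
  obtain ⟨j, hj⟩ : ∃ j, k1 + k2 = j + 1 := ⟨k1 + k2 - 1, by omega⟩
  rw [hj, Nat.add_sub_cancel]
  ring

theorem charpoly_adjMat_doubleComet_three_self {k : ℕ} (hk : 0 < k) :
    (adjMat (doubleComet k k 3)).charpoly =
      X ^ (k + k - 1) * ((X ^ 2 - C ((k : ℝ) + 2)) * (X ^ 2 - C (k : ℝ))) := by
  rw [charpoly_adjMat_doubleComet_three (by omega)]
  simp only [map_add, map_mul, map_ofNat]
  ring

theorem Polynomial.roots_X_sq_sub_C {a : ℝ} (ha : 0 ≤ a) :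
    (X ^ 2 - C a).roots = {√a, -√a} := by
  have hfactor : X ^ 2 - C a = (X - C √a) * (X - C (-√a)) := by
    nth_rewrite 1 [← Real.sq_sqrt ha]
    rw [map_neg, map_pow]
    ring
  rw [hfactor, roots_mul (mul_ne_zero (X_sub_C_ne_zero _) (X_sub_C_ne_zero _)), roots_X_sub_C,
    roots_X_sub_C, Multiset.singleton_add, Multiset.insert_eq_cons]

/-- The spectrum (multiset of adjacency eigenvalues) of `DC((n-3)/2, (n-3)/2, 3)` for odd
`n ≥ 5` is `{±√((n+1)/2), ±√((n-3)/2)}` together with `0` of multiplicity `n - 4`. -/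
theorem spectrum_balanced_DC_odd (n : ℕ) (hn : 5 ≤ n) (hodd : Odd n) :
    (Matrix.charpoly (adjMat (doubleComet ((n - 3) / 2) ((n - 3) / 2) 3))).roots =
      {Real.sqrt (((n : ℝ) + 1) / 2), -Real.sqrt (((n : ℝ) + 1) / 2),
       Real.sqrt (((n : ℝ) - 3) / 2), -Real.sqrt (((n : ℝ) - 3) / 2)} +
      Multiset.replicate (n - 4) (0 : ℝ) := by
  obtain ⟨k, rfl⟩ : ∃ k, n = k + k + 3 := by
    obtain ⟨m, rfl⟩ := hodd
    exact ⟨m - 1, by omega⟩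
  have hk : (k + k + 3 - 3) / 2 = k := by omega
  have hquartic : ((X ^ 2 - C ((k : ℝ) + 2)) * (X ^ 2 - C (k : ℝ))).Monic :=
    (monic_X_pow_sub_C _ two_ne_zero).mul (monic_X_pow_sub_C _ two_ne_zero)
  rw [hk, charpoly_adjMat_doubleComet_three_self (by omega),
    roots_mul ((monic_X_pow _).mul hquartic).ne_zero, roots_mul hquartic.ne_zero, roots_X_pow,
    roots_X_sq_sub_C (by positivity), roots_X_sq_sub_C (by positivity)]
  push_cast
  rw [show ((k : ℝ) + k + 3 + 1) / 2 = k + 2 by ring, show ((k : ℝ) + k + 3 - 3) / 2 = k by ring,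
    Multiset.nsmul_singleton, add_comm]
  simp only [Multiset.insert_eq_cons, Multiset.cons_add, Multiset.singleton_add]
end

section
/- Let T be a tree, let λ be a real number, and let z be a vector indexed by the vertices of T satisfying A(T)z = λz, where A(T) is the adjacency matrix of T. Then for every vertex u of T, λ·(λ² - deg(u))·z_u = Σ_{v ∈ N(u)} z_v·(deg(v) - 1) + Σ_{v : d(u,v)=3} z_v, where N(u) denotes the set of neighbours of u, the second sum is over all vertices v at distance exactly 3 from u, and deg denotes degree in T. -/
open scoped Classical

/-!
Root the tree at `u` and write `S k` for the sum of `z` over the vertices at distance `k`.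
Summing the eigenvalue equation over the vertices at distance `k + 1` counts every vertex at
distance `k + 2` once (it has a unique neighbour closer to `u`) and every vertex `w` at
distance `k` once per neighbour farther from `u`, i.e. `deg w - 1` times, or `deg u` times
when `w = u`. Hence `S 1 = μ z_u`, `μ S 1 = S 2 + deg(u) z_u` and
`μ S 2 = S 3 + ∑_{v ∈ N(u)} (deg v - 1) z_v`; eliminating `S 1` and `S 2` gives the identity.
-/

open Finset

namespace SimpleGraph

variable {V : Type*} {G : SimpleGraph V}

lemma Walk.dist_le_length_of_mem_support {u v x : V} (p : G.Walk u v) (hx : x ∈ p.support) :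
    G.dist u x ≤ p.length :=
  (dist_le (p.takeUntil x hx)).trans (p.length_takeUntil_le_length hx)

/-- Otherwise the shortest path from `u` to `v` would pass through `w`. -/
lemma IsTree.eq_penultimate_of_adj_of_dist_add_one (hG : G.IsTree) {u v w : V}
    {p : G.Walk u w} (hp : p.IsPath) (hadj : G.Adj v w) (hd : G.dist u v + 1 = G.dist u w) :
    v = p.penultimate := by
  refine hG.isAcyclic.eq_penultimate_of_adj_end hp hadj.symm ?_
  by_contra hv
  obtain ⟨q, hq, hql⟩ := hG.connected.exists_path_of_dist u v
  have hw := hG.isAcyclic.mem_support_of_ne_mem_support_of_adj_of_isPath hq hp hadj hv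
  have := q.dist_le_length_of_mem_support hw
  omega

variable [Fintype V]

noncomputable def sphere (G : SimpleGraph V) (u : V) (k : ℕ) : Finset V :=
  univ.filter (G.dist u · = k)

@[simp]
lemma mem_sphere {u v : V} {k : ℕ} : v ∈ G.sphere u k ↔ G.dist u v = k := by
  simp [sphere]

lemma sum_sphere {M : Type*} [AddCommMonoid M] (u : V) (k : ℕ) (f : V → M) :
    ∑ v ∈ G.sphere u k, f v = ∑ v, if G.dist u v = k then f v else 0 :=
  sum_filter _ _

lemma Connected.sphere_zero (hG : G.Connected) (u : V) : G.sphere u 0 = {u} := by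
  ext v
  simp [hG.dist_eq_zero_iff, eq_comm]

variable [DecidableRel G.Adj]

lemma sphere_one (u : V) : G.sphere u 1 = G.neighborFinset u := by
  ext v
  simp

lemma sum_neighborFinset_of_mulVec_eq_smul {R : Type*} [Semiring R] {μ : R} {z : V → R}
    (hz : (G.adjMatrix R).mulVec z = μ • z) (v : V) : ∑ w ∈ G.neighborFinset v, z w = μ * z v := by
  rw [← adjMatrix_mulVec_apply, hz, Pi.smul_apply, smul_eq_mul]

variable [DecidableEq V]

lemma IsTree.card_neighborFinset_inter_sphere_of_dist_eq_add_one (hG : G.IsTree) {u w : V}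
    {k : ℕ} (hw : G.dist u w = k + 1) : #(G.neighborFinset w ∩ G.sphere u k) = 1 := by
  obtain ⟨p, hp, hpl⟩ := hG.connected.exists_path_of_dist u w
  have hnil : ¬p.Nil := fun h => by rw [← Walk.length_eq_zero_iff] at h; omega
  have hadj : G.Adj p.penultimate w := p.adj_penultimate hnil
  have hle : G.dist u p.penultimate ≤ k :=
    (dist_le p.dropLast).trans (by rw [Walk.length_dropLast]; omega)
  rw [card_eq_one]
  refine ⟨p.penultimate, ?_⟩
  ext v
  simp only [mem_inter, mem_neighborFinset, mem_sphere, mem_singleton]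
  constructor
  · rintro ⟨hwv, hv⟩
    exact hG.eq_penultimate_of_adj_of_dist_add_one hp hwv.symm (by omega)
  · rintro rfl
    have := hG.dist_eq_dist_add_one_of_adj u hadj
    exact ⟨hadj.symm, by omega⟩

lemma IsTree.card_neighborFinset_inter_sphere_eq_zero (hG : G.IsTree) {u w : V} {k : ℕ}
    (h₁ : G.dist u w ≠ k + 1) (h₂ : G.dist u w + 1 ≠ k) :
    #(G.neighborFinset w ∩ G.sphere u k) = 0 := by
  rw [card_eq_zero, eq_empty_iff_forall_notMem]
  intro v hv
  simp only [mem_inter, mem_neighborFinset, mem_sphere] at hv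
  have := hG.dist_eq_dist_add_one_of_adj u hv.1
  omega

lemma IsTree.card_neighborFinset_inter_sphere_add_one (hG : G.IsTree) {u w : V} {k : ℕ}
    (hw : G.dist u w = k + 1) : #(G.neighborFinset w ∩ G.sphere u (k + 2)) + 1 = G.degree w := by
  have hsplit : (G.neighborFinset w ∩ G.sphere u (k + 2)) ∪ (G.neighborFinset w ∩ G.sphere u k) =
      G.neighborFinset w := by
    ext v
    simp only [mem_union, mem_inter, mem_neighborFinset, mem_sphere]
    have := fun h : G.Adj w v => hG.dist_eq_dist_add_one_of_adj u h
    grind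
  have hdisj : Disjoint (G.neighborFinset w ∩ G.sphere u (k + 2))
      (G.neighborFinset w ∩ G.sphere u k) := by
    rw [Finset.disjoint_left]
    simp only [mem_inter, mem_sphere]
    omega
  have hcard := card_union_of_disjoint hdisj
  rw [hsplit, hG.card_neighborFinset_inter_sphere_of_dist_eq_add_one hw] at hcard
  rw [← card_neighborFinset_eq_degree, hcard]

lemma sum_sum_neighborFinset {M : Type*} [AddCommMonoid M] (s : Finset V) (f : V → M) :
    ∑ v ∈ s, ∑ w ∈ G.neighborFinset v, f w = ∑ w, #(G.neighborFinset w ∩ s) • f w := by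
  rw [sum_comm' (t' := univ) (s' := fun w => G.neighborFinset w ∩ s)]
  · simp only [sum_const]
  · simp [and_comm, G.adj_comm]

/-- Every vertex at distance `k + 2` from `u` has exactly one neighbour at distance `k + 1`,
and the vertices at distance `k` are the only other ones with such neighbours. -/
lemma IsTree.sum_sphere_sum_neighborFinset {M : Type*} [AddCommMonoid M] (hG : G.IsTree)
    (u : V) (k : ℕ) (f : V → M) :
    ∑ v ∈ G.sphere u (k + 1), ∑ w ∈ G.neighborFinset v, f w =
      ∑ w ∈ G.sphere u (k + 2), f w +
        ∑ w ∈ G.sphere u k, #(G.neighborFinset w ∩ G.sphere u (k + 1)) • f w := by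
  rw [sum_sum_neighborFinset, sum_sphere, sum_sphere, ← sum_add_distrib]
  refine sum_congr rfl fun w _ => ?_
  by_cases h₂ : G.dist u w = k + 2
  · rw [hG.card_neighborFinset_inter_sphere_of_dist_eq_add_one h₂]
    simp [h₂]
  by_cases h₀ : G.dist u w = k
  · simp [h₀]
  rw [hG.card_neighborFinset_inter_sphere_eq_zero h₂ (by omega)]
  simp [h₂, h₀]

lemma IsTree.mul_sum_sphere_of_mulVec_eq_smul {R : Type*} [Semiring R] (hG : G.IsTree)
    {μ : R} {z : V → R} (hz : (G.adjMatrix R).mulVec z = μ • z) (u : V) (k : ℕ) :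
    μ * ∑ v ∈ G.sphere u (k + 1), z v =
      ∑ w ∈ G.sphere u (k + 2), z w +
        ∑ w ∈ G.sphere u k, #(G.neighborFinset w ∩ G.sphere u (k + 1)) • z w := by
  rw [← hG.sum_sphere_sum_neighborFinset, mul_sum]
  exact sum_congr rfl fun v _ => (sum_neighborFinset_of_mulVec_eq_smul hz v).symm

end SimpleGraph

open SimpleGraph

lemma adjMat_eq_adjMatrix {n : ℕ} (G : SimpleGraph (Fin n)) : adjMat G = G.adjMatrix ℝ := rfl

lemma deg_eq_degree {n : ℕ} (G : SimpleGraph (Fin n)) (v : Fin n) : deg G v = G.degree v := by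
  rw [deg, ← card_neighborFinset_eq_degree, neighborFinset_eq_filter]

/-- The eigenvalue–eigenvector equation at distance three in a tree:
`λ (λ² - deg(u)) z_u = ∑_{v ∈ N(u)} z_v (deg(v) - 1) + ∑_{d(u,v)=3} z_v`. -/
theorem eigenvalue_equation_dist_three {n : ℕ} (T : SimpleGraph (Fin n)) (hT : T.IsTree)
    (μ : ℝ) (z : Fin n → ℝ) (hz : (adjMat T).mulVec z = μ • z) (u : Fin n) :
    μ * (μ ^ 2 - (deg T u : ℝ)) * z u =
      (∑ v ∈ Finset.univ.filter (fun v => T.Adj u v), z v * ((deg T v : ℝ) - 1)) +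
        ∑ v ∈ Finset.univ.filter (fun v => T.dist u v = 3), z v := by
  rw [adjMat_eq_adjMatrix] at hz
  simp only [deg_eq_degree, ← neighborFinset_eq_filter]
  change _ = _ + ∑ v ∈ T.sphere u 3, z v
  have h₀ := sum_neighborFinset_of_mulVec_eq_smul hz u
  have h₁ := hT.mul_sum_sphere_of_mulVec_eq_smul hz u 0
  have h₂ := hT.mul_sum_sphere_of_mulVec_eq_smul hz u 1
  rw [hT.connected.sphere_zero, sum_singleton, sphere_one, inter_self,
    card_neighborFinset_eq_degree, nsmul_eq_mul] at h₁
  have hchildren (w : Fin n) (hw : w ∈ T.sphere u 1) :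
      #(T.neighborFinset w ∩ T.sphere u 2) • z w = z w * ((T.degree w : ℝ) - 1) := by
    rw [nsmul_eq_mul, ← hT.card_neighborFinset_inter_sphere_add_one (mem_sphere.1 hw)]
    push_cast
    ring
  rw [sum_congr rfl hchildren, sphere_one] at h₂
  linear_combination -μ ^ 2 * h₀ + μ * h₁ + h₂
end
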